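/- arXiv:1005.3799 — 2 statements merged into one kernel-verified Lean document; each statement's English description precedes it below -/
import Mathlib

section
/- Let (Ω, 𝓕, P) be a probability space, T₀ > 0, and let η : Ω × [0,T₀] × [0,T₀] → ℝ be jointly measurable such that, for P-a.e. ω, the function (s,r,τ) ↦ |η(ω,s,r)·η(ω,s,τ)|·log(T₀/(r ∨ τ)) is integrable on [0,T₀]³ and ∫₀^{T₀}∫₀^{T₀} u·η(ω,t,u)² du dt < ∞. If E_P[ exp( ∫₀^{T₀}∫₀^{T₀} [ log(T₀/u)·η(·,t,u)·λ(·,t,u)/2 + u·η(·,t,u)² ] du dt ) ] < ∞, then E_P[ exp( (1/2) ∫₀^{T₀}∫₀^{T₀} g(·,s,u)² du ds ) ] < ∞. -/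
open MeasureTheory Real Set

/-- The market price of risk: `λ(ω,s,T) = ∫₀^T η(ω,s,u) du`. -/
noncomputable def mpr {Ω : Type*} (η : Ω → ℝ → ℝ → ℝ) (ω : Ω) (s T : ℝ) : ℝ :=
  ∫ u in (0:ℝ)..T, η ω s u

/-- The integrand of the space-time Girsanov kernel:
`g(ω,s,u) = λ(ω,s,u)/(2√u) + √u·η(ω,s,u)`. -/
noncomputable def gker {Ω : Type*} (η : Ω → ℝ → ℝ → ℝ) (ω : Ω) (s u : ℝ) : ℝ :=
  mpr η ω s u / (2 * Real.sqrt u) + Real.sqrt u * η ω s u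

/-!
Fix `ω` and `s`, and write `f = η(ω,s,·)`, `Λ(u) = ∫₀^u f`. Pointwise `½(a + b)² ≤ a² + b²`
gives `½ g² ≤ Λ²/(4u) + u f²`. Writing `Λ(u)²` as a double integral and
`log (T/m) = ∫_m^T du/u`, Fubini gives `∫₀^T Λ(u)²/u du = ∫∫ f(r) f(τ) log (T/(r ∨ τ)) dr dτ`,
and since this kernel is symmetric in `(r, τ)`, the right side is `2 ∫₀^T log (T/u) f(u) Λ(u) du`.
So `½ ∫∫ g²` is bounded by the exponent in (C1) for every `ω`, and monotonicity of `exp` and of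
the expectation concludes.
-/

lemma ae_prod_fst_ne_snd {α : Type*} [MeasurableSpace α] [MeasurableEq α] {μ ν : Measure α}
    [SFinite ν] [NullSingletonClass ν] : ∀ᵐ z ∂μ.prod ν, z.1 ≠ z.2 :=
  (Measure.ae_prod_iff_ae_ae (measurableSet_eq_fun measurable_fst measurable_snd).compl).2 <|
    ae_of_all _ fun x => (measure_eq_zero_iff_ae_notMem.1 (measure_singleton x)).mono
      fun _ hy hxy => hy hxy.symm

lemma integral_indicator_snd_le_fst {μ : Measure ℝ} [SFinite μ] [NullSingletonClass μ]
    {W : ℝ × ℝ → ℝ} (hW : Integrable W (μ.prod μ)) (hsymm : ∀ z, W z.swap = W z) :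
    ∫ z, {z : ℝ × ℝ | z.2 ≤ z.1}.indicator W z ∂μ.prod μ = (1 / 2) * ∫ z, W z ∂μ.prod μ := by
  set S := {z : ℝ × ℝ | z.2 ≤ z.1}.indicator W
  have hS : Integrable S (μ.prod μ) :=
    hW.indicator (measurableSet_le measurable_snd measurable_fst)
  have hsum : ∀ᵐ z ∂μ.prod μ, S z + S z.swap = W z := by
    filter_upwards [ae_prod_fst_ne_snd] with z hz
    rcases hz.lt_or_gt with h | h
    · simp [S, h.not_ge, h.le, hsymm]
    · simp [S, h.not_ge, h.le]
  have h2 : 2 * ∫ z, S z ∂μ.prod μ = ∫ z, W z ∂μ.prod μ := calc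
    _ = ∫ z, S z ∂μ.prod μ + ∫ z, S z.swap ∂μ.prod μ := by rw [two_mul, integral_prod_swap]
    _ = ∫ z, (S z + S z.swap) ∂μ.prod μ := (integral_add hS hS.swap).symm
    _ = ∫ z, W z ∂μ.prod μ := integral_congr_ae hsum
  linarith

lemma integrableOn_indicator_Ici_inv {m T : ℝ} (hm : 0 < m) :
    IntegrableOn ((Ici m).indicator fun u => u⁻¹) (Ioc 0 T) := by
  rw [integrableOn_indicator_iff measurableSet_Ici]
  refine (ContinuousOn.integrableOn_compact isCompact_Icc ?_).mono_set
    (fun u hu => ⟨hu.1, hu.2.2⟩ : Ici m ∩ Ioc 0 T ⊆ Icc m T)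
  exact continuousOn_inv₀.mono fun u hu => (hm.trans_le hu.1).ne'

lemma setIntegral_indicator_Ici_inv {m T : ℝ} (hm : 0 < m) (hmT : m ≤ T) :
    ∫ u in Ioc 0 T, (Ici m).indicator (fun u => u⁻¹) u = log (T / m) := by
  have hIcc : Ioc 0 T ∩ Ici m = Icc m T := by
    ext u
    simp only [mem_inter_iff, mem_Ioc, mem_Ici, mem_Icc]
    exact ⟨fun h => ⟨h.2, h.1.2⟩, fun h => ⟨⟨hm.trans_le h.1, h.2⟩, h.1⟩⟩
  rw [setIntegral_indicator measurableSet_Ici, hIcc, integral_Icc_eq_integral_Ioc,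
    ← intervalIntegral.integral_of_le hmT, integral_inv_of_pos hm (hm.trans_le hmT)]

lemma half_sq_div_two_sqrt_add_sqrt_mul_le {u : ℝ} (hu : 0 < u) (a b : ℝ) :
    (1 / 2) * (a / (2 * √u) + √u * b) ^ 2 ≤ a ^ 2 / u / 4 + u * b ^ 2 := by
  obtain ⟨s, hs, rfl⟩ : ∃ s, 0 < s ∧ u = s ^ 2 := ⟨√u, sqrt_pos.2 hu, (sq_sqrt hu.le).symm⟩
  have : a ^ 2 / s ^ 2 / 4 + s ^ 2 * b ^ 2 = (a / (2 * s)) ^ 2 + (s * b) ^ 2 := by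
    field_simp
    ring
  rw [sqrt_sq hs.le, this]
  linarith [add_sq_le (a := a / (2 * s)) (b := s * b)]

noncomputable def logKernel (T : ℝ) (f : ℝ → ℝ) (p : ℝ × ℝ) : ℝ :=
  f p.1 * f p.2 * log (T / max p.1 p.2)

/-- `logKernel T f` with `log (T / m)` unfolded as `∫ u in m..T, u⁻¹`. -/
noncomputable def unfoldedLogKernel (f : ℝ → ℝ) : (ℝ × ℝ) × ℝ → ℝ :=
  {z | max z.1.1 z.1.2 ≤ z.2}.indicator fun z => f z.1.1 * f z.1.2 / z.2

section Slice

variable {T : ℝ} {f : ℝ → ℝ}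

local notation "μT" => volume.restrict (Ioc (0:ℝ) T)

lemma ae_mem_Ioc_prod : ∀ᵐ p ∂(μT).prod μT, p ∈ Ioc 0 T ×ˢ Ioc 0 T := by
  rw [Measure.prod_restrict]
  exact ae_restrict_mem (measurableSet_Ioc.prod measurableSet_Ioc)

lemma logKernel_swap (p : ℝ × ℝ) : logKernel T f p.swap = logKernel T f p := by
  simp only [logKernel, Prod.fst_swap, Prod.snd_swap, max_comm, mul_comm (f p.2)]

lemma norm_logKernel {p : ℝ × ℝ} (hp : p ∈ Ioc 0 T ×ˢ Ioc 0 T) :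
    ‖logKernel T f p‖ = |f p.1 * f p.2| * log (T / max p.1 p.2) := by
  have hm : 0 < max p.1 p.2 := lt_max_of_lt_left hp.1.1
  rw [logKernel, norm_mul, norm_eq_abs, norm_of_nonneg
    (log_nonneg ((one_le_div hm).2 (max_le hp.1.2 hp.2.2)))]

lemma intervalIntegral_eq_setIntegral_indicator {u : ℝ} (hu : u ∈ Ioc 0 T) :
    ∫ t in 0..u, f t = ∫ r in Ioc 0 T, (Ioc 0 u).indicator f r := by
  rw [intervalIntegral.integral_of_le hu.1.le, setIntegral_indicator measurableSet_Ioc,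
    inter_eq_self_of_subset_right (Ioc_subset_Ioc_right hu.2)]

lemma unfoldedLogKernel_apply (p : ℝ × ℝ) (u : ℝ) :
    unfoldedLogKernel f (p, u) = f p.1 * f p.2 * (Ici (max p.1 p.2)).indicator (·⁻¹) u := by
  simp only [unfoldedLogKernel, indicator_apply, mem_ofPred_eq, mem_Ici]
  split_ifs <;> simp [div_eq_mul_inv]

lemma norm_unfoldedLogKernel {p : ℝ × ℝ} (hp : 0 ≤ p.1) (u : ℝ) :
    ‖unfoldedLogKernel f (p, u)‖ = unfoldedLogKernel (fun x => |f x|) (p, u) := by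
  simp only [unfoldedLogKernel, indicator_apply, mem_ofPred_eq]
  split_ifs with h
  · rw [norm_div, norm_mul, norm_eq_abs, norm_eq_abs,
      norm_of_nonneg (hp.trans (le_of_max_le_left h))]
  · exact norm_zero

lemma setIntegral_unfoldedLogKernel {p : ℝ × ℝ} (hp : p ∈ Ioc 0 T ×ˢ Ioc 0 T) :
    ∫ u in Ioc 0 T, unfoldedLogKernel f (p, u) = logKernel T f p := by
  simp only [unfoldedLogKernel_apply, integral_const_mul]
  rw [setIntegral_indicator_Ici_inv (lt_max_of_lt_left hp.1.1) (max_le hp.1.2 hp.2.2),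
    logKernel]

lemma integral_unfoldedLogKernel {u : ℝ} (hu : u ∈ Ioc 0 T) :
    ∫ p, unfoldedLogKernel f (p, u) ∂(μT).prod μT = (∫ t in 0..u, f t) ^ 2 / u := by
  have h : ∀ᵐ p ∂(μT).prod μT, unfoldedLogKernel f (p, u)
      = (Ioc 0 u).indicator f p.1 * (Ioc 0 u).indicator f p.2 / u := by
    filter_upwards [ae_mem_Ioc_prod] with p hp
    by_cases h1 : p.1 ≤ u <;> by_cases h2 : p.2 ≤ u <;>
      simp [unfoldedLogKernel, indicator, hp.1.1, hp.2.1, h1, h2]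
  rw [integral_congr_ae h, integral_div, integral_prod_mul,
    ← intervalIntegral_eq_setIntegral_indicator hu, sq]

lemma setIntegral_indicator_logKernel {u : ℝ} (hu : u ∈ Ioc 0 T) :
    ∫ r in Ioc 0 T, {z : ℝ × ℝ | z.2 ≤ z.1}.indicator (logKernel T f) (u, r)
      = log (T / u) * f u * ∫ t in 0..u, f t := by
  rw [intervalIntegral_eq_setIntegral_indicator hu, ← integral_const_mul]
  refine setIntegral_congr_fun measurableSet_Ioc fun r hr => ?_
  by_cases h : r ≤ u
  · simp only [mem_ofPred_eq, h, indicator_of_mem, logKernel, sup_of_le_left, mem_Ioc, hr.1,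
      and_self]
    ring
  · simp [h, hr.1]

section Integrable

variable (hf : Measurable f)
  (hK : Integrable (fun p : ℝ × ℝ => |f p.1 * f p.2| * log (T / max p.1 p.2))
    ((volume.restrict (Ioc 0 T)).prod (volume.restrict (Ioc 0 T))))
include hf hK

lemma integrable_logKernel : Integrable (logKernel T f) ((μT).prod μT) := by
  refine hK.mono' ?_ ?_
  · unfold logKernel
    fun_prop
  · filter_upwards [ae_mem_Ioc_prod] with p hp using (norm_logKernel hp).le

lemma integrable_unfoldedLogKernel :
    Integrable (unfoldedLogKernel f) (((μT).prod μT).prod μT) := by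
  have hmeas : Measurable (unfoldedLogKernel f) :=
    Measurable.indicator (by fun_prop) (measurableSet_le (by fun_prop) (by fun_prop))
  rw [integrable_prod_iff hmeas.aestronglyMeasurable]
  constructor
  · filter_upwards [ae_mem_Ioc_prod] with p hp
    simp only [unfoldedLogKernel_apply]
    exact (integrableOn_indicator_Ici_inv (lt_max_of_lt_left hp.1.1)).const_mul _
  · refine hK.congr ?_
    filter_upwards [ae_mem_Ioc_prod] with p hp
    simp only [norm_unfoldedLogKernel hp.1.1.le, setIntegral_unfoldedLogKernel hp, logKernel,
      abs_mul]

lemma integrableOn_sq_intervalIntegral_div :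
    IntegrableOn (fun u => (∫ t in 0..u, f t) ^ 2 / u) (Ioc 0 T) :=
  (integrable_unfoldedLogKernel hf hK).integral_prod_right.congr <| by
    filter_upwards [ae_restrict_mem measurableSet_Ioc] with u hu
    exact integral_unfoldedLogKernel hu

lemma setIntegral_sq_intervalIntegral_div :
    ∫ u in Ioc 0 T, (∫ t in 0..u, f t) ^ 2 / u = ∫ p, logKernel T f p ∂(μT).prod μT := calc
  _ = ∫ u in Ioc 0 T, ∫ p, unfoldedLogKernel f (p, u) ∂(μT).prod μT :=
    setIntegral_congr_fun measurableSet_Ioc fun u hu => (integral_unfoldedLogKernel hu).symm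
  _ = ∫ p, (∫ u in Ioc 0 T, unfoldedLogKernel f (p, u)) ∂(μT).prod μT :=
    (integral_integral_swap (f := fun p u => unfoldedLogKernel f (p, u))
      (integrable_unfoldedLogKernel hf hK)).symm
  _ = ∫ p, logKernel T f p ∂(μT).prod μT := integral_congr_ae <| by
    filter_upwards [ae_mem_Ioc_prod] with p hp using setIntegral_unfoldedLogKernel hp

lemma integrableOn_log_mul_intervalIntegral :
    IntegrableOn (fun u => log (T / u) * f u * ∫ t in 0..u, f t) (Ioc 0 T) :=
  ((integrable_logKernel hf hK).indicator
    (measurableSet_le measurable_snd measurable_fst)).integral_prod_left.congr <| by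
    filter_upwards [ae_restrict_mem measurableSet_Ioc] with u hu
    exact setIntegral_indicator_logKernel hu

lemma setIntegral_log_mul_intervalIntegral :
    ∫ u in Ioc 0 T, log (T / u) * f u * (∫ t in 0..u, f t)
      = (1 / 2) * ∫ p, logKernel T f p ∂(μT).prod μT := by
  rw [← integral_indicator_snd_le_fst (integrable_logKernel hf hK) logKernel_swap,
    ← integral_integral (f := fun u r => {z : ℝ × ℝ | z.2 ≤ z.1}.indicator (logKernel T f) (u, r))
      ((integrable_logKernel hf hK).indicator (measurableSet_le measurable_snd measurable_fst))]
  exact setIntegral_congr_fun measurableSet_Ioc fun u hu =>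
    (setIntegral_indicator_logKernel hu).symm

variable (hQ : IntegrableOn (fun u => u * f u ^ 2) (Ioc 0 T))
include hQ

lemma half_setIntegral_sq_le :
    (1 / 2) * ∫ u in Ioc 0 T, ((∫ t in 0..u, f t) / (2 * √u) + √u * f u) ^ 2
      ≤ (1 / 4) * ∫ p, logKernel T f p ∂(μT).prod μT + ∫ u in Ioc 0 T, u * f u ^ 2 := by
  have hΛ := integrableOn_sq_intervalIntegral_div hf hK
  calc (1 / 2) * ∫ u in Ioc 0 T, ((∫ t in 0..u, f t) / (2 * √u) + √u * f u) ^ 2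
      = ∫ u in Ioc 0 T, (1 / 2) * ((∫ t in 0..u, f t) / (2 * √u) + √u * f u) ^ 2 :=
        (integral_const_mul _ _).symm
    _ ≤ ∫ u in Ioc 0 T, ((∫ t in 0..u, f t) ^ 2 / u / 4 + u * f u ^ 2) := by
      refine integral_mono_of_nonneg (ae_of_all _ fun u => by positivity)
        ((hΛ.div_const 4).add hQ) ?_
      filter_upwards [ae_restrict_mem measurableSet_Ioc] with u hu
      exact half_sq_div_two_sqrt_add_sqrt_mul_le hu.1 _ _
    _ = (1 / 4) * ∫ p, logKernel T f p ∂(μT).prod μT + ∫ u in Ioc 0 T, u * f u ^ 2 := by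
      rw [integral_add (hΛ.div_const 4) hQ, integral_div,
        setIntegral_sq_intervalIntegral_div hf hK]
      ring

lemma setIntegral_log_mul_intervalIntegral_div_two_add :
    ∫ u in Ioc 0 T, (log (T / u) * f u * (∫ t in 0..u, f t) / 2 + u * f u ^ 2)
      = (1 / 4) * ∫ p, logKernel T f p ∂(μT).prod μT + ∫ u in Ioc 0 T, u * f u ^ 2 := by
  rw [integral_add ((integrableOn_log_mul_intervalIntegral hf hK).div_const 2) hQ,
    integral_div, setIntegral_log_mul_intervalIntegral hf hK]
  ring

end Integrable

lemma half_integral_integral_sq_le {h : ℝ → ℝ → ℝ} (hh : Measurable (Function.uncurry h))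
    (hK : IntegrableOn
      (fun q : ℝ × ℝ × ℝ => |h q.1 q.2.1 * h q.1 q.2.2| * log (T / max q.2.1 q.2.2))
      (Ioc 0 T ×ˢ Ioc 0 T ×ˢ Ioc 0 T))
    (hQ : IntegrableOn (fun p : ℝ × ℝ => p.2 * h p.1 p.2 ^ 2) (Ioc 0 T ×ˢ Ioc 0 T)) :
    (1 / 2) * ∫ s in Ioc 0 T, ∫ u in Ioc 0 T, ((∫ t in 0..u, h s t) / (2 * √u) + √u * h s u) ^ 2
      ≤ ∫ s in Ioc 0 T, ∫ u in Ioc 0 T,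
          (log (T / u) * h s u * (∫ t in 0..u, h s t) / 2 + u * h s u ^ 2) := by
  simp only [IntegrableOn, Measure.volume_eq_prod, ← Measure.prod_restrict] at hK hQ
  have hhs : ∀ s, Measurable (h s) := fun s => hh.comp measurable_prodMk_left
  have hL : Integrable (fun q : ℝ × ℝ × ℝ => logKernel T (h q.1) q.2)
      ((μT).prod ((μT).prod μT)) := by
    refine hK.mono' (by unfold logKernel; fun_prop) ?_
    filter_upwards [Measure.quasiMeasurePreserving_snd.ae ae_mem_Ioc_prod] with q hq
    exact (norm_logKernel hq).le
  have hR : Integrable (fun s => (1 / 4) * ∫ p, logKernel T (h s) p ∂(μT).prod μT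
      + ∫ u in Ioc 0 T, u * h s u ^ 2) μT :=
    (hL.integral_prod_left.const_mul _).add hQ.integral_prod_left
  rw [← integral_const_mul]
  refine integral_mono_of_nonneg (ae_of_all _ fun s => by positivity) (hR.congr ?_) ?_
  · filter_upwards [hK.prod_right_ae, hQ.prod_right_ae] with s hKs hQs
    exact (setIntegral_log_mul_intervalIntegral_div_two_add (hhs s) hKs hQs).symm
  · filter_upwards [hK.prod_right_ae, hQ.prod_right_ae] with s hKs hQs
    exact (half_setIntegral_sq_le (hhs s) hKs hQs).trans_eq
      (setIntegral_log_mul_intervalIntegral_div_two_add (hhs s) hKs hQs).symm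

end Slice

theorem stmt5_general {Ω : Type*} [MeasurableSpace Ω] (P : Measure Ω)
    (T₀ : ℝ) (η : Ω → ℝ → ℝ → ℝ)
    (hmeas : Measurable (fun p : Ω × ℝ × ℝ => η p.1 p.2.1 p.2.2))
    (hintabs : ∀ᵐ ω ∂P, IntegrableOn
      (fun p : ℝ × ℝ × ℝ => |η ω p.1 p.2.1 * η ω p.1 p.2.2| * Real.log (T₀ / max p.2.1 p.2.2))
      (Ioc (0:ℝ) T₀ ×ˢ Ioc (0:ℝ) T₀ ×ˢ Ioc (0:ℝ) T₀))
    (hsq : ∀ᵐ ω ∂P, IntegrableOn (fun p : ℝ × ℝ => p.2 * η ω p.1 p.2 ^ 2)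
      (Ioc (0:ℝ) T₀ ×ˢ Ioc (0:ℝ) T₀))
    (hC1 : ∫⁻ ω, ENNReal.ofReal (Real.exp
        (∫ t in Ioc (0:ℝ) T₀, ∫ u in Ioc (0:ℝ) T₀,
          (Real.log (T₀ / u) * η ω t u * mpr η ω t u / 2 + u * η ω t u ^ 2))) ∂P < ⊤) :
    ∫⁻ ω, ENNReal.ofReal (Real.exp
        ((1 / 2) * ∫ s in Ioc (0:ℝ) T₀, ∫ u in Ioc (0:ℝ) T₀, (gker η ω s u) ^ 2)) ∂P < ⊤ := by
  refine lt_of_le_of_lt (lintegral_mono_ae ?_) hC1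
  filter_upwards [hintabs, hsq] with ω hKω hQω
  exact ENNReal.ofReal_le_ofReal <| exp_le_exp.2 <|
    half_integral_integral_sq_le (hmeas.comp measurable_prodMk_left) hKω hQω

/-- Condition (C1) of the paper's Theorem 1 implies the generalized Novikov condition
`E_P[exp((1/2)∫∫ g(·,s,u)² du ds)] < ∞`. -/
theorem stmt5 {Ω : Type*} [MeasurableSpace Ω] (P : Measure Ω) [IsProbabilityMeasure P]
    (T₀ : ℝ) (hT₀ : 0 < T₀) (η : Ω → ℝ → ℝ → ℝ)
    (hmeas : Measurable (fun p : Ω × ℝ × ℝ => η p.1 p.2.1 p.2.2))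
    (hintabs : ∀ᵐ ω ∂P, IntegrableOn
      (fun p : ℝ × ℝ × ℝ => |η ω p.1 p.2.1 * η ω p.1 p.2.2| * Real.log (T₀ / max p.2.1 p.2.2))
      (Ioc (0:ℝ) T₀ ×ˢ Ioc (0:ℝ) T₀ ×ˢ Ioc (0:ℝ) T₀))
    (hsq : ∀ᵐ ω ∂P, IntegrableOn (fun p : ℝ × ℝ => p.2 * η ω p.1 p.2 ^ 2)
      (Ioc (0:ℝ) T₀ ×ˢ Ioc (0:ℝ) T₀))
    (hC1 : ∫⁻ ω, ENNReal.ofReal (Real.exp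
        (∫ t in Ioc (0:ℝ) T₀, ∫ u in Ioc (0:ℝ) T₀,
          (Real.log (T₀ / u) * η ω t u * mpr η ω t u / 2 + u * η ω t u ^ 2))) ∂P < ⊤) :
    ∫⁻ ω, ENNReal.ofReal (Real.exp
        ((1 / 2) * ∫ s in Ioc (0:ℝ) T₀, ∫ u in Ioc (0:ℝ) T₀, (gker η ω s u) ^ 2)) ∂P < ⊤ :=
  stmt5_general P T₀ η hmeas hintabs hsq hC1
end

section
/- Let (Ω, 𝓕, P) be a probability space, T₀ > 0, and let η : Ω × [0,T₀] × [0,T₀] → ℝ be jointly measurable with η(ω,·,·) ∈ L²([0,T₀]²) for P-a.e. ω. If E_P[ exp( (5T₀/4) ∫₀^{T₀}∫₀^{T₀} η(·,t,u)² du dt ) ] < ∞, then E_P[ exp( (1/2) ∫₀^{T₀}∫₀^{T₀} g(·,s,u)² du ds ) ] < ∞. -/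
open MeasureTheory Real Set

/-!
By Cauchy–Schwarz, `λ(s,u)² ≤ u ∫₀^T₀ η(s,v)² dv` for `0 < u ≤ T₀`, and with `(a + b)² ≤ 2a² + 2b²`
this gives `g(s,u)² ≤ ½ ∫₀^T₀ η(s,v)² dv + 2T₀ η(s,u)²`. Integrating over the square yields
`∫∫ g² ≤ (5T₀/2) ∫∫ η²`, so the Novikov integrand is dominated ω-wise by the one in (C2).
-/

theorem sq_integral_le_measureReal_mul_integral_sq {α : Type*} [MeasurableSpace α]
    {μ : Measure α} [IsFiniteMeasure μ] {f : α → ℝ} (hf : MemLp f 2 μ) :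
    (∫ x, f x ∂μ) ^ 2 ≤ μ.real univ * ∫ x, f x ^ 2 ∂μ := by
  rcases eq_zero_or_neZero μ with rfl | _
  · simp
  have hjensen : (⨍ x, f x ∂μ) ^ 2 ≤ ⨍ x, f x ^ 2 ∂μ :=
    (even_two.convexOn_pow).map_average_le (continuous_pow 2).continuousOn isClosed_univ
      (ae_of_all _ fun _ => mem_univ _) (hf.integrable one_le_two) hf.integrable_sq
  have hm : 0 < μ.real univ := measureReal_univ_pos
  rw [average_eq, average_eq, smul_eq_mul, smul_eq_mul, mul_pow] at hjensen
  have := mul_le_mul_of_nonneg_left hjensen (sq_nonneg (μ.real univ))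
  field_simp at this
  nlinarith

theorem MeasureTheory.MemLp.prod_right_ae {α β : Type*} [MeasurableSpace α] [MeasurableSpace β]
    {μ : Measure α} {ν : Measure β} [SFinite μ] [SFinite ν] {f : α × β → ℝ}
    (hf : MemLp f 2 (μ.prod ν)) : ∀ᵐ x ∂μ, MemLp (fun y => f (x, y)) 2 ν := by
  filter_upwards [hf.aestronglyMeasurable.prodMk_left, hf.integrable_sq.prod_right_ae]
    with x hmeas hint
  exact (memLp_two_iff_integrable_sq hmeas).2 hint

theorem sq_div_two_sqrt_add_sqrt_mul_le {u : ℝ} (hu : 0 < u) (a b : ℝ) :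
    (a / (2 * √u) + √u * b) ^ 2 ≤ a ^ 2 / (2 * u) + 2 * u * b ^ 2 := by
  have hsq : √u ^ 2 = u := sq_sqrt hu.le
  calc (a / (2 * √u) + √u * b) ^ 2 ≤ 2 * ((a / (2 * √u)) ^ 2 + (√u * b) ^ 2) := add_sq_le
    _ = a ^ 2 / (2 * u) + 2 * u * b ^ 2 := by
      rw [div_pow, mul_pow, mul_pow, hsq]
      field_simp

section Slice

variable {Ω : Type*} {η : Ω → ℝ → ℝ → ℝ} {ω : Ω} {s T u : ℝ}

theorem mpr_sq_le (hη : MemLp (η ω s) 2 (volume.restrict (Ioc 0 T))) (hu : u ∈ Ioc 0 T) :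
    mpr η ω s u ^ 2 ≤ u * ∫ v in Ioc 0 T, η ω s v ^ 2 := by
  have hsub : Ioc 0 u ⊆ Ioc 0 T := Ioc_subset_Ioc_right hu.2
  have hηu : MemLp (η ω s) 2 (volume.restrict (Ioc 0 u)) :=
    hη.mono_measure (Measure.restrict_mono hsub le_rfl)
  have hcs := sq_integral_le_measureReal_mul_integral_sq hηu
  rw [measureReal_restrict_apply_univ, Real.volume_real_Ioc_of_le hu.1.le, sub_zero] at hcs
  rw [mpr, intervalIntegral.integral_of_le hu.1.le]
  calc _ ≤ u * ∫ v in Ioc 0 u, η ω s v ^ 2 := hcs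
    _ ≤ u * ∫ v in Ioc 0 T, η ω s v ^ 2 :=
      mul_le_mul_of_nonneg_left (setIntegral_mono_set hη.integrable_sq
        (ae_of_all _ fun _ => sq_nonneg _) hsub.eventuallyLE) hu.1.le

theorem gker_sq_le (hη : MemLp (η ω s) 2 (volume.restrict (Ioc 0 T))) (hu : u ∈ Ioc 0 T) :
    gker η ω s u ^ 2 ≤ (∫ v in Ioc 0 T, η ω s v ^ 2) / 2 + 2 * T * η ω s u ^ 2 := by
  have hmpr := mpr_sq_le hη hu
  calc gker η ω s u ^ 2 ≤ mpr η ω s u ^ 2 / (2 * u) + 2 * u * η ω s u ^ 2 :=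
        sq_div_two_sqrt_add_sqrt_mul_le hu.1 _ _
    _ ≤ _ := by
      have hfirst : mpr η ω s u ^ 2 / (2 * u) ≤ (∫ v in Ioc 0 T, η ω s v ^ 2) / 2 := by
        rw [div_le_div_iff₀ (by linarith [hu.1]) two_pos]
        linarith
      have hsecond : 2 * u * η ω s u ^ 2 ≤ 2 * T * η ω s u ^ 2 := by
        gcongr
        exact hu.2
      linarith

theorem integral_gker_sq_le (hT : 0 ≤ T) (hη : MemLp (η ω s) 2 (volume.restrict (Ioc 0 T))) :
    ∫ u in Ioc 0 T, gker η ω s u ^ 2 ≤ 5 * T / 2 * ∫ u in Ioc 0 T, η ω s u ^ 2 := by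
  set F := ∫ v in Ioc 0 T, η ω s v ^ 2
  have hbound : Integrable (fun u => F / 2 + 2 * T * η ω s u ^ 2) (volume.restrict (Ioc 0 T)) :=
    (integrable_const _).add (hη.integrable_sq.const_mul _)
  calc ∫ u in Ioc 0 T, gker η ω s u ^ 2 ≤ ∫ u in Ioc 0 T, (F / 2 + 2 * T * η ω s u ^ 2) :=
        integral_mono_of_nonneg (ae_of_all _ fun _ => sq_nonneg _) hbound
          ((ae_restrict_iff' measurableSet_Ioc).2 (ae_of_all _ fun _ hu => gker_sq_le hη hu))
    _ = 5 * T / 2 * F := by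
      rw [integral_add (integrable_const _) (hη.integrable_sq.const_mul _), integral_const,
        integral_const_mul, measureReal_restrict_apply_univ, Real.volume_real_Ioc_of_le hT,
        smul_eq_mul]
      ring

theorem integral_integral_gker_sq_le (hT : 0 ≤ T)
    (hη : MemLp (Function.uncurry (η ω)) 2 (volume.restrict (Ioc 0 T ×ˢ Ioc 0 T))) :
    ∫ s in Ioc 0 T, ∫ u in Ioc 0 T, gker η ω s u ^ 2 ≤
      5 * T / 2 * ∫ s in Ioc 0 T, ∫ u in Ioc 0 T, η ω s u ^ 2 := by
  rw [Measure.volume_eq_prod, ← Measure.prod_restrict] at hη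
  rw [← integral_const_mul]
  exact integral_mono_of_nonneg (ae_of_all _ fun _ => integral_nonneg fun _ => sq_nonneg _)
    (hη.integrable_sq.integral_prod_left.const_mul _)
    (hη.prod_right_ae.mono fun _ hs => integral_gker_sq_le hT hs)

end Slice

theorem stmt6_general {Ω : Type*} [MeasurableSpace Ω] (P : Measure Ω)
    (T₀ : ℝ) (hT₀ : 0 < T₀) (η : Ω → ℝ → ℝ → ℝ)
    (hL2 : ∀ᵐ ω ∂P, MemLp (Function.uncurry (η ω)) 2
      (volume.restrict (Ioc (0:ℝ) T₀ ×ˢ Ioc (0:ℝ) T₀)))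
    (hC2 : ∫⁻ ω, ENNReal.ofReal (Real.exp
        ((5 * T₀ / 4) * ∫ t in Ioc (0:ℝ) T₀, ∫ u in Ioc (0:ℝ) T₀, η ω t u ^ 2)) ∂P < ⊤) :
    ∫⁻ ω, ENNReal.ofReal (Real.exp
        ((1 / 2) * ∫ s in Ioc (0:ℝ) T₀, ∫ u in Ioc (0:ℝ) T₀, (gker η ω s u) ^ 2)) ∂P < ⊤ := by
  refine lt_of_le_of_lt (lintegral_mono_ae ?_) hC2
  filter_upwards [hL2] with ω hω
  refine ENNReal.ofReal_le_ofReal (exp_le_exp.2 ?_)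
  calc 1 / 2 * ∫ s in Ioc 0 T₀, ∫ u in Ioc 0 T₀, gker η ω s u ^ 2
      ≤ 1 / 2 * (5 * T₀ / 2 * ∫ s in Ioc 0 T₀, ∫ u in Ioc 0 T₀, η ω s u ^ 2) := by
        gcongr
        exact integral_integral_gker_sq_le hT₀.le hω
    _ = 5 * T₀ / 4 * ∫ t in Ioc 0 T₀, ∫ u in Ioc 0 T₀, η ω t u ^ 2 := by ring

/-- Condition (C2) of the paper's Corollary 1,
`E_P[exp((5T₀/4)∫∫ η²)] < ∞`, implies the generalized Novikov condition
`E_P[exp((1/2)∫∫ g(·,s,u)² du ds)] < ∞`. -/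
theorem stmt6 {Ω : Type*} [MeasurableSpace Ω] (P : Measure Ω) [IsProbabilityMeasure P]
    (T₀ : ℝ) (hT₀ : 0 < T₀) (η : Ω → ℝ → ℝ → ℝ)
    (hmeas : Measurable (fun p : Ω × ℝ × ℝ => η p.1 p.2.1 p.2.2))
    (hL2 : ∀ᵐ ω ∂P, MemLp (Function.uncurry (η ω)) 2
      (volume.restrict (Ioc (0:ℝ) T₀ ×ˢ Ioc (0:ℝ) T₀)))
    (hC2 : ∫⁻ ω, ENNReal.ofReal (Real.exp
        ((5 * T₀ / 4) * ∫ t in Ioc (0:ℝ) T₀, ∫ u in Ioc (0:ℝ) T₀, η ω t u ^ 2)) ∂P < ⊤) :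
    ∫⁻ ω, ENNReal.ofReal (Real.exp
        ((1 / 2) * ∫ s in Ioc (0:ℝ) T₀, ∫ u in Ioc (0:ℝ) T₀, (gker η ω s u) ^ 2)) ∂P < ⊤ :=
  stmt6_general P T₀ hT₀ η hL2 hC2
end
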